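/- arXiv:1202.0037 — 4 statements merged into one kernel-verified Lean document; each statement's English description precedes it below -/
import Mathlib

section
/- Let a, b, c be reals with c ≠ 0, and let x₀ be a root of a² - 2bx + cx² = 0 such that the integrand is integrable on [0, x₀]. Define I(k) = ∫₀^{x₀} xᵏ dx/√(a² - 2bx + cx²) (as improper integrals, assumed to converge). Then for every natural number n ≥ 1: n·a²·I(n-1) = (2n+1)·b·I(n) - (n+1)·c·I(n+1). -/
/-!
Put `Q x = a² - 2bx + cx²` and `g x = xⁿ √(Q x)`. Wherever `Q x ≠ 0`,
`g' x = (n a² xⁿ⁻¹ - (2n+1) b xⁿ + (n+1) c xⁿ⁺¹) / √(Q x)`; this also holds where `Q < 0`, since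
there `g` vanishes near `x` and `√(Q x) = 0`. As `c ≠ 0`, `Q` has finitely many zeros, so the
fundamental theorem of calculus applies on `[0, x₀]` and gives `∫ g' = g x₀ - g 0 = 0`, which is
the recurrence.
-/

open MeasureTheory Polynomial

lemma finite_setOf_quadratic_eq_zero {a b c : ℝ} (hc : c ≠ 0) :
    {x : ℝ | a ^ 2 - 2 * b * x + c * x ^ 2 = 0}.Finite := by
  let p : ℝ[X] := C c * X ^ 2 - C (2 * b) * X + C (a ^ 2)
  have hp : p ≠ 0 := fun h => hc <| by
    simpa [p, coeff_X, coeff_C, -map_pow] using congrArg (coeff · 2) h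
  convert finite_setOfPred_isRoot hp using 1
  ext x
  simp only [Set.mem_ofPred_eq, p, IsRoot, eval_add, eval_sub, eval_mul, eval_C, eval_pow, eval_X]
  ring_nf

lemma HasDerivAt.pow_succ_mul_sqrt {f : ℝ → ℝ} {f' x : ℝ} (n : ℕ) (hf : HasDerivAt f f' x)
    (hx : f x ≠ 0) :
    HasDerivAt (fun y => y ^ (n + 1) * √(f y))
      ((((n : ℝ) + 1) * f x + x * f' / 2) * x ^ n / √(f x)) x := by
  refine ((hasDerivAt_pow (n + 1) x).mul (hf.sqrt hx)).congr_deriv ?_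
  nth_rw 1 [← Real.div_sqrt (x := f x)]
  push_cast
  ring

lemma hasDerivAt_pow_succ_mul_sqrt_quadratic (a b c : ℝ) (n : ℕ) {x : ℝ}
    (hx : a ^ 2 - 2 * b * x + c * x ^ 2 ≠ 0) :
    HasDerivAt (fun y => y ^ (n + 1) * √(a ^ 2 - 2 * b * y + c * y ^ 2))
      (((n : ℝ) + 1) * a ^ 2 * (x ^ n / √(a ^ 2 - 2 * b * x + c * x ^ 2))
        - (2 * n + 3) * b * (x ^ (n + 1) / √(a ^ 2 - 2 * b * x + c * x ^ 2))
        + (n + 2) * c * (x ^ (n + 2) / √(a ^ 2 - 2 * b * x + c * x ^ 2))) x := by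
  have hQ : HasDerivAt (fun y => a ^ 2 - 2 * b * y + c * y ^ 2) (2 * c * x - 2 * b) x := by
    refine (((hasDerivAt_id x).const_mul (2 * b)).const_sub (a ^ 2) |>.add
      ((hasDerivAt_pow 2 x).const_mul c)).congr_deriv ?_
    push_cast
    ring
  refine (hQ.pow_succ_mul_sqrt n hx).congr_deriv ?_
  ring

theorem moment_combination_eq_zero {a b c x₀ : ℝ} (hc : c ≠ 0)
    (hroot : a ^ 2 - 2 * b * x₀ + c * x₀ ^ 2 = 0) (n : ℕ)
    (hint : ∀ k, IntervalIntegrable (fun x => x ^ k / √(a ^ 2 - 2 * b * x + c * x ^ 2))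
      volume 0 x₀) :
    ((n : ℝ) + 1) * a ^ 2 * (∫ x in 0..x₀, x ^ n / √(a ^ 2 - 2 * b * x + c * x ^ 2))
      - (2 * n + 3) * b * (∫ x in 0..x₀, x ^ (n + 1) / √(a ^ 2 - 2 * b * x + c * x ^ 2))
      + (n + 2) * c * (∫ x in 0..x₀, x ^ (n + 2) / √(a ^ 2 - 2 * b * x + c * x ^ 2)) = 0 := by
  have h₀ := (hint n).const_mul (((n : ℝ) + 1) * a ^ 2)
  have h₁ := (hint (n + 1)).const_mul ((2 * (n : ℝ) + 3) * b)
  have h₂ := (hint (n + 2)).const_mul (((n : ℝ) + 2) * c)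
  have hftc := integral_eq_of_hasDerivAt_off_countable _ _
    (finite_setOf_quadratic_eq_zero (a := a) (b := b) hc).countable (by fun_prop)
    (fun x hx => hasDerivAt_pow_succ_mul_sqrt_quadratic a b c n hx.2) ((h₀.sub h₁).add h₂)
  rw [intervalIntegral.integral_add (h₀.sub h₁) h₂, intervalIntegral.integral_sub h₀ h₁]
    at hftc
  simpa only [intervalIntegral.integral_const_mul, hroot, Real.sqrt_zero, mul_zero,
    zero_pow n.succ_ne_zero, zero_mul, sub_zero] using hftc

theorem euler_moment_recursion (a b c x₀ : ℝ) (hc : c ≠ 0)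
    (hroot : a ^ 2 - 2 * b * x₀ + c * x₀ ^ 2 = 0)
    (hint : ∀ k : ℕ, IntervalIntegrable
      (fun x => x ^ k / Real.sqrt (a ^ 2 - 2 * b * x + c * x ^ 2))
      MeasureTheory.volume 0 x₀)
    (I : ℕ → ℝ)
    (hI : ∀ k : ℕ, I k = ∫ x in (0 : ℝ)..x₀, x ^ k / Real.sqrt (a ^ 2 - 2 * b * x + c * x ^ 2)) :
    ∀ n : ℕ, 1 ≤ n →
      (n : ℝ) * a ^ 2 * I (n - 1) = (2 * n + 1) * b * I n - (n + 1) * c * I (n + 1) := by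
  intro n hn
  obtain ⟨m, rfl⟩ := Nat.exists_eq_add_of_le' hn
  have h := moment_combination_eq_zero hc hroot m hint
  rw [Nat.add_sub_cancel, hI, hI, hI]
  push_cast
  linarith
end

section
/- Under the same hypotheses (a, b, c real, c ≠ 0, x₀ a root of a² - 2bx + cx², Δ = ∫₀^{x₀} dx/√(a² - 2bx + cx²), integrals convergent), ∫₀^{x₀} x² dx/√(a² - 2bx + cx²) = ((3b² - a²c)/(2c²))·Δ - 3ab/(2c²). -/
/-!
Write `Q x = a² - 2bx + cx²` and `I k = ∫₀^{x₀} xᵏ / √(Q x)`. Wherever `Q x ≠ 0`,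
`(√Q)' = (cx - b) / √Q` and `(x √Q)' = (a² - 3bx + 2cx²) / √Q`: for `Q x > 0` this is the chain
and product rule, and for `Q x < 0` both sides vanish, because `√` of a negative number and
division by `0` are both `0`. As `c ≠ 0`, `Q` has finitely many zeros, so the fundamental theorem
of calculus applies off them and gives, with `√(Q 0) = a` and `Q x₀ = 0`,
`c I₁ - b I₀ = -a` and `a² I₀ - 3b I₁ + 2c I₂ = 0`. Eliminating `I₁` gives
`2c² I₂ = (3b² - a²c) I₀ - 3ab`.
-/

open Real intervalIntegral Polynomial

noncomputable def eulerMoment (a b c u v : ℝ) (k : ℕ) : ℝ :=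
  ∫ x in u..v, x ^ k / √(a ^ 2 - 2 * b * x + c * x ^ 2)

section Quadratic

variable {a b c u v : ℝ}

theorem hasDerivAt_quadratic (x : ℝ) :
    HasDerivAt (fun y => a ^ 2 - 2 * b * y + c * y ^ 2) (2 * c * x - 2 * b) x :=
  ((((hasDerivAt_id x).const_mul (2 * b)).const_sub (a ^ 2)).add
    ((hasDerivAt_pow 2 x).const_mul c)).congr_deriv (by simp; ring)

theorem setOf_quadratic_eq_zero_finite (hc : c ≠ 0) :
    {x : ℝ | a ^ 2 - 2 * b * x + c * x ^ 2 = 0}.Finite := by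
  set p : ℝ[X] := C c * X ^ 2 - C (2 * b) * X + C (a ^ 2)
  have hp : p ≠ 0 := fun h => hc <| by
    simpa [p, coeff_X, coeff_C, -map_pow] using congrArg (coeff · 2) h
  convert finite_setOfPred_isRoot hp using 3
  simp [p]
  ring_nf

theorem eulerMoment_reduction_one (hc : c ≠ 0)
    (hi : ∀ k : ℕ, IntervalIntegrable (fun x => x ^ k / √(a ^ 2 - 2 * b * x + c * x ^ 2))
      MeasureTheory.volume u v) :
    c * eulerMoment a b c u v 1 - b * eulerMoment a b c u v 0 =
      √(a ^ 2 - 2 * b * v + c * v ^ 2) - √(a ^ 2 - 2 * b * u + c * u ^ 2) := by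
  have hi₀ := hi 0
  have hi₁ := hi 1
  simp only [pow_zero, pow_one] at hi₀ hi₁
  simp only [eulerMoment, pow_zero, pow_one]
  rw [← integral_const_mul, ← integral_const_mul,
    ← integral_sub (hi₁.const_mul c) (hi₀.const_mul b)]
  refine MeasureTheory.integral_eq_of_hasDerivAt_off_countable
    (fun x => √(a ^ 2 - 2 * b * x + c * x ^ 2)) _
    (setOf_quadratic_eq_zero_finite (a := a) (b := b) hc).countable (by fun_prop)
    (fun x hx => ?_) ((hi₁.const_mul c).sub (hi₀.const_mul b))
  exact ((hasDerivAt_quadratic x).sqrt hx.2).congr_deriv (by ring)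

theorem eulerMoment_reduction_two (hc : c ≠ 0)
    (hi : ∀ k : ℕ, IntervalIntegrable (fun x => x ^ k / √(a ^ 2 - 2 * b * x + c * x ^ 2))
      MeasureTheory.volume u v) :
    a ^ 2 * eulerMoment a b c u v 0 - 3 * b * eulerMoment a b c u v 1
        + 2 * c * eulerMoment a b c u v 2 =
      v * √(a ^ 2 - 2 * b * v + c * v ^ 2) - u * √(a ^ 2 - 2 * b * u + c * u ^ 2) := by
  have hi₀ := hi 0
  have hi₁ := hi 1
  have hi₂ := hi 2
  simp only [pow_zero, pow_one] at hi₀ hi₁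
  simp only [eulerMoment, pow_zero, pow_one]
  rw [← integral_const_mul, ← integral_const_mul, ← integral_const_mul,
    ← integral_sub (hi₀.const_mul _) (hi₁.const_mul _),
    ← integral_add ((hi₀.const_mul _).sub (hi₁.const_mul _)) (hi₂.const_mul _)]
  refine MeasureTheory.integral_eq_of_hasDerivAt_off_countable
    (fun x => x * √(a ^ 2 - 2 * b * x + c * x ^ 2)) _
    (setOf_quadratic_eq_zero_finite (a := a) (b := b) hc).countable (by fun_prop)
    (fun x hx => ?_) (((hi₀.const_mul _).sub (hi₁.const_mul _)).add (hi₂.const_mul _))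
  refine ((hasDerivAt_id' x).mul ((hasDerivAt_quadratic x).sqrt hx.2)).congr_deriv ?_
  -- `√Q = Q / √Q` holds for every `Q`, including `Q ≤ 0`.
  linear_combination (-1 : ℝ) * div_sqrt (x := a ^ 2 - 2 * b * x + c * x ^ 2)

end Quadratic

theorem euler_second_moment_general (a b c x₀ : ℝ) (hc : c ≠ 0) (ha : 0 < a)
    (hroot : a ^ 2 - 2 * b * x₀ + c * x₀ ^ 2 = 0)
    (hint : ∀ k : ℕ, IntervalIntegrable
      (fun x => x ^ k / Real.sqrt (a ^ 2 - 2 * b * x + c * x ^ 2))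
      MeasureTheory.volume 0 x₀)
    (Δ : ℝ)
    (hΔ : Δ = ∫ x in (0 : ℝ)..x₀, 1 / Real.sqrt (a ^ 2 - 2 * b * x + c * x ^ 2)) :
    ∫ x in (0 : ℝ)..x₀, x ^ 2 / Real.sqrt (a ^ 2 - 2 * b * x + c * x ^ 2)
      = ((3 * b ^ 2 - a ^ 2 * c) / (2 * c ^ 2)) * Δ - 3 * a * b / (2 * c ^ 2) := by
  have h₁ := eulerMoment_reduction_one hc hint
  have h₂ := eulerMoment_reduction_two hc hint
  have hsqrt₀ : √(a ^ 2 - 2 * b * 0 + c * 0 ^ 2) = a := by simpa using sqrt_sq ha.le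
  rw [hroot, sqrt_zero, hsqrt₀] at h₁ h₂
  have hΔ₀ : Δ = eulerMoment a b c 0 x₀ 0 := by simpa [eulerMoment] using hΔ
  change eulerMoment a b c 0 x₀ 2 = _
  rw [hΔ₀]
  field_simp
  linear_combination 3 * b * h₁ + c * h₂

theorem euler_second_moment (a b c x₀ : ℝ) (hc : c ≠ 0) (ha : 0 < a) (hx₀ : 0 < x₀)
    (hroot : a ^ 2 - 2 * b * x₀ + c * x₀ ^ 2 = 0)
    (hint : ∀ k : ℕ, IntervalIntegrable
      (fun x => x ^ k / Real.sqrt (a ^ 2 - 2 * b * x + c * x ^ 2))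
      MeasureTheory.volume 0 x₀)
    (Δ : ℝ)
    (hΔ : Δ = ∫ x in (0 : ℝ)..x₀, 1 / Real.sqrt (a ^ 2 - 2 * b * x + c * x ^ 2)) :
    ∫ x in (0 : ℝ)..x₀, x ^ 2 / Real.sqrt (a ^ 2 - 2 * b * x + c * x ^ 2)
      = ((3 * b ^ 2 - a ^ 2 * c) / (2 * c ^ 2)) * Δ - 3 * a * b / (2 * c ^ 2) :=
  euler_second_moment_general a b c x₀ hc ha hroot hint Δ hΔ
end

section
/- Under the same hypotheses, ∫₀^{x₀} x³ dx/√(a² - 2bx + cx²) = (5b³/(2c³) - 3a²b/(2c²))·Δ - 5ab²/(2c³) + 2a³/(3c²). -/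
/-!
Differentiating `x ^ n * √Q` with `Q x = a ^ 2 - 2 * b * x + c * x ^ 2`, and using `√Q = Q / √Q`,
gives `(n * a ^ 2 * x ^ (n - 1) - (2 * n + 1) * b * x ^ n + (n + 1) * c * x ^ (n + 1)) / √Q`.
Since `Q` vanishes at `x₀`, integrating over `[0, x₀]` yields a three-term recurrence between the
moments `∫ x ^ k / √Q`, whose cases `n = 0, 1, 2` express the third moment through `Δ`.

Nothing forces `Q > 0` on `(0, x₀)`, but no case analysis is needed: with `√t = 0` for `t ≤ 0`
and `t / 0 = 0`, the identity `√Q = Q / √Q` and the derivative formula hold wherever `Q ≠ 0`,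
and the finitely many zeros of `Q` are allowed as exceptions in the fundamental theorem of
calculus.
-/

open Polynomial MeasureTheory intervalIntegral

noncomputable section

namespace Euler

def quadratic (a b c x : ℝ) : ℝ := a ^ 2 - 2 * b * x + c * x ^ 2

def moment (a b c x₀ : ℝ) (k : ℕ) : ℝ := ∫ x in (0 : ℝ)..x₀, x ^ k / √(quadratic a b c x)

variable {a b c : ℝ}

theorem continuous_quadratic : Continuous (quadratic a b c) := by
  unfold quadratic
  fun_prop

theorem hasDerivAt_quadratic (x : ℝ) : HasDerivAt (quadratic a b c) (2 * (c * x - b)) x := by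
  have h := (((hasDerivAt_id x).const_mul (2 * b)).const_sub (a ^ 2)).add
    ((hasDerivAt_pow 2 x).const_mul c)
  exact h.congr_deriv (by ring)

theorem finite_setOf_quadratic_eq_zero (ha : a ≠ 0) : {x | quadratic a b c x = 0}.Finite := by
  let p : ℝ[X] := C (a ^ 2) - C (2 * b) * X + C c * X ^ 2
  have hp : p ≠ 0 := fun h => by simpa [p, ha] using congrArg (eval 0) h
  convert finite_setOfPred_isRoot hp using 2
  simp [p, quadratic]

theorem hasDerivAt_sqrt_quadratic {x : ℝ} (hx : quadratic a b c x ≠ 0) :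
    HasDerivAt (fun y => √(quadratic a b c y)) ((c * x - b) / √(quadratic a b c x)) x := by
  refine ((Real.hasDerivAt_sqrt hx).comp x (hasDerivAt_quadratic x)).congr_deriv ?_
  field_simp

theorem hasDerivAt_pow_mul_sqrt_quadratic (n : ℕ) {x : ℝ} (hx : quadratic a b c x ≠ 0) :
    HasDerivAt (fun y => y ^ n * √(quadratic a b c y))
      (n * a ^ 2 * (x ^ (n - 1) / √(quadratic a b c x))
        - (2 * n + 1) * b * (x ^ n / √(quadratic a b c x))
        + (n + 1) * c * (x ^ (n + 1) / √(quadratic a b c x))) x := by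
  refine ((hasDerivAt_pow n x).mul (hasDerivAt_sqrt_quadratic hx)).congr_deriv ?_
  set s := √(quadratic a b c x)
  have hs : s = quadratic a b c x / s := Real.div_sqrt.symm
  nth_rw 1 [hs]
  rcases n with _ | m
  · norm_num
    ring
  · simp only [quadratic, Nat.add_sub_cancel]
    push_cast
    ring

/-- The truncation in `n - 1` is harmless: for `n = 0` that term has coefficient `0`. -/
theorem moment_recurrence (ha : 0 < a) {x₀ : ℝ} (hroot : quadratic a b c x₀ = 0)
    (hint : ∀ k : ℕ, IntervalIntegrable (fun x => x ^ k / √(quadratic a b c x)) volume 0 x₀)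
    (n : ℕ) :
    n * a ^ 2 * moment a b c x₀ (n - 1) - (2 * n + 1) * b * moment a b c x₀ n
      + (n + 1) * c * moment a b c x₀ (n + 1) = -(0 ^ n * a) := by
  have hFTC := integral_eq_of_hasDerivAt_off_countable (fun y => y ^ n * √(quadratic a b c y))
    _ (finite_setOf_quadratic_eq_zero ha.ne').countable
    ((continuous_pow n).mul continuous_quadratic.sqrt).continuousOn
    (fun x hx => hasDerivAt_pow_mul_sqrt_quadratic n hx.2)
    ((((hint _).const_mul _).sub ((hint _).const_mul _)).add ((hint _).const_mul _))
  rw [integral_add (((hint _).const_mul _).sub ((hint _).const_mul _)) ((hint _).const_mul _),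
    integral_sub ((hint _).const_mul _) ((hint _).const_mul _),
    intervalIntegral.integral_const_mul, intervalIntegral.integral_const_mul,
    intervalIntegral.integral_const_mul] at hFTC
  have hQ0 : quadratic a b c 0 = a ^ 2 := by simp [quadratic]
  simp only [moment]
  rw [hFTC, hroot, hQ0, Real.sqrt_zero, Real.sqrt_sq ha.le, mul_zero, zero_sub]

end Euler

open Euler in
theorem euler_third_moment_general (a b c x₀ : ℝ) (hc : c ≠ 0) (ha : 0 < a)
    (hroot : a ^ 2 - 2 * b * x₀ + c * x₀ ^ 2 = 0)
    (hint : ∀ k : ℕ, IntervalIntegrable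
      (fun x => x ^ k / Real.sqrt (a ^ 2 - 2 * b * x + c * x ^ 2))
      MeasureTheory.volume 0 x₀)
    (Δ : ℝ)
    (hΔ : Δ = ∫ x in (0 : ℝ)..x₀, 1 / Real.sqrt (a ^ 2 - 2 * b * x + c * x ^ 2)) :
    ∫ x in (0 : ℝ)..x₀, x ^ 3 / Real.sqrt (a ^ 2 - 2 * b * x + c * x ^ 2)
      = (5 * b ^ 3 / (2 * c ^ 3) - 3 * a ^ 2 * b / (2 * c ^ 2)) * Δ
        - 5 * a * b ^ 2 / (2 * c ^ 3) + 2 * a ^ 3 / (3 * c ^ 2) := by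
  have hΔ0 : Δ = moment a b c x₀ 0 := by simp [hΔ, moment, quadratic]
  have e0 := moment_recurrence ha hroot hint 0
  have e1 := moment_recurrence ha hroot hint 1
  have e2 := moment_recurrence ha hroot hint 2
  norm_num at e0 e1 e2
  change moment a b c x₀ 3 = _
  rw [hΔ0]
  field_simp
  linear_combination (2 * c ^ 2) * e2 + (5 * b * c) * e1 + (15 * b ^ 2 - 4 * a ^ 2 * c) * e0

theorem euler_third_moment (a b c x₀ : ℝ) (hc : c ≠ 0) (ha : 0 < a) (hx₀ : 0 < x₀)
    (hroot : a ^ 2 - 2 * b * x₀ + c * x₀ ^ 2 = 0)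
    (hint : ∀ k : ℕ, IntervalIntegrable
      (fun x => x ^ k / Real.sqrt (a ^ 2 - 2 * b * x + c * x ^ 2))
      MeasureTheory.volume 0 x₀)
    (Δ : ℝ)
    (hΔ : Δ = ∫ x in (0 : ℝ)..x₀, 1 / Real.sqrt (a ^ 2 - 2 * b * x + c * x ^ 2)) :
    ∫ x in (0 : ℝ)..x₀, x ^ 3 / Real.sqrt (a ^ 2 - 2 * b * x + c * x ^ 2)
      = (5 * b ^ 3 / (2 * c ^ 3) - 3 * a ^ 2 * b / (2 * c ^ 2)) * Δ
        - 5 * a * b ^ 2 / (2 * c ^ 3) + 2 * a ^ 3 / (3 * c ^ 2) :=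
  euler_third_moment_general a b c x₀ hc ha hroot hint Δ hΔ
end
end

section
/- With the convergent sequences P_k, Q_k defined by P₁ = 0, Q₁ = 1, P₂ = 2m, Q₂ = n, P_{k+2} = (2k+1)n·P_{k+1} - k²m²·P_k, Q_{k+2} = (2k+1)n·Q_{k+1} - k²m²·Q_k, one has for all k ≥ 1: P_{k+1}·Q_k - P_k·Q_{k+1} = 2·((k-1)!)²·m^{2k-1}. -/
/-!
Both `P` and `Q` solve the same three-term recurrence `x (k+2) = a k * x (k+1) - b k * x k`, so
their Casoratian `P (k+1) * Q k - P k * Q (k+1)` gets multiplied by `b k = k² m²` at each step.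
Starting from the value `2m` at `k = 1`, it is therefore `2 ((k-1)!)² m^(2k-1)`.
-/

theorem casoratian_succ_of_recurrence {R : Type*} [CommRing R] {a b x y : ℕ → R} {k : ℕ}
    (hx : x (k + 2) = a k * x (k + 1) - b k * x k)
    (hy : y (k + 2) = a k * y (k + 1) - b k * y k) :
    x (k + 2) * y (k + 1) - x (k + 1) * y (k + 2) = b k * (x (k + 1) * y k - x k * y (k + 1)) := by
  rw [hx, hy]
  ring

theorem two_mul_factorial_sq_mul_pow_succ {R : Type*} [CommRing R] (m : R) {k : ℕ}
    (hk : 1 ≤ k) :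
    2 * (k.factorial : R) ^ 2 * m ^ (2 * (k + 1) - 1) =
      (k : R) ^ 2 * m ^ 2 * (2 * ((k - 1).factorial : R) ^ 2 * m ^ (2 * k - 1)) := by
  obtain ⟨j, rfl⟩ := Nat.exists_eq_add_of_le' hk
  simp only [Nat.add_sub_cancel, Nat.factorial_succ, Nat.cast_mul,
    show 2 * (j + 1 + 1) - 1 = 2 * j + 3 by omega, show 2 * (j + 1) - 1 = 2 * j + 1 by omega]
  push_cast
  ring

theorem euler_log_convergents_determinant_general (m n : ℝ) (P Q : ℕ → ℝ)
    (hP1 : P 1 = 0) (hQ1 : Q 1 = 1) (hP2 : P 2 = 2 * m)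
    (hPrec : ∀ k : ℕ, 1 ≤ k → P (k + 2) = (2 * k + 1) * n * P (k + 1) - k ^ 2 * m ^ 2 * P k)
    (hQrec : ∀ k : ℕ, 1 ≤ k → Q (k + 2) = (2 * k + 1) * n * Q (k + 1) - k ^ 2 * m ^ 2 * Q k) :
    ∀ k : ℕ, 1 ≤ k →
      P (k + 1) * Q k - P k * Q (k + 1) = 2 * ((Nat.factorial (k - 1) : ℝ)) ^ 2 * m ^ (2 * k - 1) := by
  intro k hk
  induction k, hk using Nat.le_induction with
  | base => simp [hP1, hQ1, hP2]
  | succ k hk ih =>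
    rw [casoratian_succ_of_recurrence (a := fun k : ℕ => (2 * k + 1) * n)
      (b := fun k : ℕ => (k : ℝ) ^ 2 * m ^ 2) (hPrec k hk) (hQrec k hk), ih,
      Nat.add_sub_cancel, two_mul_factorial_sq_mul_pow_succ m hk]

theorem euler_log_convergents_determinant (m n : ℝ) (P Q : ℕ → ℝ)
    (hP1 : P 1 = 0) (hQ1 : Q 1 = 1) (hP2 : P 2 = 2 * m) (hQ2 : Q 2 = n)
    (hPrec : ∀ k : ℕ, 1 ≤ k → P (k + 2) = (2 * k + 1) * n * P (k + 1) - k ^ 2 * m ^ 2 * P k)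
    (hQrec : ∀ k : ℕ, 1 ≤ k → Q (k + 2) = (2 * k + 1) * n * Q (k + 1) - k ^ 2 * m ^ 2 * Q k) :
    ∀ k : ℕ, 1 ≤ k →
      P (k + 1) * Q k - P k * Q (k + 1) = 2 * ((Nat.factorial (k - 1) : ℝ)) ^ 2 * m ^ (2 * k - 1) :=
  euler_log_convergents_determinant_general m n P Q hP1 hQ1 hP2 hPrec hQrec
end
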